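/- arXiv:1911.00491 — 4 statements merged into one kernel-verified Lean document; each statement's English description precedes it below -/
import Mathlib

section
/- Let a > 0, b ≥ 0, λ > 0. If b/a − 1 < −λ/a², then the unique minimizer of F(m) = (1/2)(b − m·a)² + λ|m − 1| over m ∈ ℝ is m = (b·a + λ)/a². -/
/-- The scalar objective of the sparse frame multiplier estimation problem. -/
noncomputable def Fobj (a b lam m : ℝ) : ℝ := (1/2) * (b - m * a)^2 + lam * |m - 1|

/-!
Replacing `|m - 1|` by `1 - m` gives a quadratic minorant of the objective which is exact for
`m ≤ 1`. Its vertex is `M = (b a + λ) / a²`, which the case hypothesis places below `1`, and the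
quadratic exceeds its vertex value by `a² (x - M)² / 2`, so `M` is the strict minimiser.
-/

noncomputable def FobjLeft (a b lam m : ℝ) : ℝ := (1/2) * (b - m * a)^2 + lam * (1 - m)

lemma FobjLeft_eq_Fobj {a b lam m : ℝ} (hm : m ≤ 1) : FobjLeft a b lam m = Fobj a b lam m := by
  rw [FobjLeft, Fobj, abs_of_nonpos (sub_nonpos.mpr hm), neg_sub]

lemma FobjLeft_le_Fobj {a b lam : ℝ} (hl : 0 ≤ lam) (m : ℝ) :
    FobjLeft a b lam m ≤ Fobj a b lam m := by
  have : 1 - m ≤ |m - 1| := by rw [abs_sub_comm]; exact le_abs_self _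
  unfold FobjLeft Fobj
  gcongr

lemma FobjLeft_eq_add_sq {a b lam M : ℝ} (hM : M * a^2 = b * a + lam) (x : ℝ) :
    FobjLeft a b lam x = FobjLeft a b lam M + a^2 / 2 * (x - M)^2 := by
  unfold FobjLeft
  linear_combination (x - M) * hM

lemma div_sq_lt_one_of_div_sub_one_lt {a b lam : ℝ} (ha : a ≠ 0)
    (hcase : b / a - 1 < -(lam / a^2)) : (b * a + lam) / a^2 < 1 := by
  have ha2 : 0 < a^2 := by positivity
  rw [div_lt_one ha2]
  have h := mul_lt_mul_of_pos_right hcase ha2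
  have hleft : (b / a - 1) * a^2 = b * a - a^2 := by field_simp
  rw [hleft, neg_mul, div_mul_cancel₀ _ ha2.ne'] at h
  linarith

theorem stmt2_general (a b lam : ℝ) (ha : 0 < a) (hl : 0 < lam)
    (hcase : b / a - 1 < -(lam / a^2)) :
    ∀ x : ℝ, x ≠ (b * a + lam) / a^2 →
      Fobj a b lam ((b * a + lam) / a^2) < Fobj a b lam x := by
  intro x hx
  set M := (b * a + lam) / a^2
  have hM : M * a^2 = b * a + lam := div_mul_cancel₀ _ (by positivity)
  have hgap : 0 < a^2 / 2 * (x - M)^2 := by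
    have : x - M ≠ 0 := sub_ne_zero.mpr hx
    positivity
  have hM1 : M ≤ 1 := (div_sq_lt_one_of_div_sub_one_lt ha.ne' hcase).le
  calc Fobj a b lam M
      = FobjLeft a b lam M := (FobjLeft_eq_Fobj hM1).symm
    _ < FobjLeft a b lam M + a^2 / 2 * (x - M)^2 := lt_add_of_pos_right _ hgap
    _ = FobjLeft a b lam x := (FobjLeft_eq_add_sq hM x).symm
    _ ≤ Fobj a b lam x := FobjLeft_le_Fobj hl.le x

theorem stmt2 (a b lam : ℝ) (ha : 0 < a) (hb : 0 ≤ b) (hl : 0 < lam)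
    (hcase : b / a - 1 < -(lam / a^2)) :
    ∀ x : ℝ, x ≠ (b * a + lam) / a^2 →
      Fobj a b lam ((b * a + lam) / a^2) < Fobj a b lam x :=
  stmt2_general a b lam ha hl hcase
end

section
/- Let a > 0, λ > 0, and let m*(b) be the unique minimizer of F_b(m) = (1/2)(b − m·a)² + λ|m − 1|. Then for all b ≥ 0, |m*(b) − b/a| ≤ λ/a², i.e., the regularized mask differs from the unregularized ratio b/a by at most λ/a². -/
/-!
Completing the square, `Fobj a b λ x = a² / 2 · (x - b / a)² + λ |x - 1|`: a parabola with
curvature `a²` centred at `b / a`, perturbed by a `λ`-Lipschitz term. Moving a point `m` with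
`|m - b / a| = u > t := λ / a²` to distance `t` from the centre lowers the parabola by
`a² (u² - t²) / 2` and raises the perturbation by at most `λ (u - t) = a² t (u - t)`, a net
change of `-a² (u - t)² / 2 < 0`; so a minimizer lies within `λ / a²` of `b / a`.
-/

open NNReal

section QuadraticAddLipschitz

variable {k d m : ℝ} {K : ℝ≥0} {h : ℝ → ℝ}

theorem sub_le_of_forall_quadratic_add_lipschitz_le (hk : 0 < k) (hh : LipschitzWith K h)
    (hm : ∀ x, k / 2 * (m - d) ^ 2 + h m ≤ k / 2 * (x - d) ^ 2 + h x) :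
    m - d ≤ K / k := by
  by_contra! hlt
  set t : ℝ := K / k
  have hK : (K : ℝ) = k * t := (mul_div_cancel₀ _ hk.ne').symm
  have hlip : h (d + t) - h m ≤ K * (m - (d + t)) := by
    have := hh.dist_le_mul (d + t) m
    rw [Real.dist_eq, Real.dist_eq, abs_of_neg (show d + t - m < 0 by linarith)] at this
    linarith [le_abs_self (h (d + t) - h m)]
  have hcompare := hm (d + t)
  rw [hK] at hlip
  nlinarith [mul_pos hk (mul_pos (sub_pos.2 hlt) (sub_pos.2 hlt))]

theorem abs_sub_le_of_forall_quadratic_add_lipschitz_le (hk : 0 < k) (hh : LipschitzWith K h)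
    (hm : ∀ x, k / 2 * (m - d) ^ 2 + h m ≤ k / 2 * (x - d) ^ 2 + h x) :
    |m - d| ≤ K / k := by
  refine abs_sub_le_iff.2 ⟨sub_le_of_forall_quadratic_add_lipschitz_le hk hh hm, ?_⟩
  have hh_neg : LipschitzWith K (fun x => h (-x)) := by
    simpa [Function.comp_def] using hh.comp (isometry_neg (G := ℝ)).lipschitz
  have hm_neg (x : ℝ) :
      k / 2 * (-m - -d) ^ 2 + h (-(-m)) ≤ k / 2 * (x - -d) ^ 2 + h (-x) := by
    rw [show (-m - -d) ^ 2 = (m - d) ^ 2 by ring, show (x - -d) ^ 2 = (-x - d) ^ 2 by ring, neg_neg]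
    exact hm (-x)
  linarith [sub_le_of_forall_quadratic_add_lipschitz_le hk hh_neg hm_neg]

end QuadraticAddLipschitz

theorem lipschitzWith_const_mul_abs_sub (c : ℝ) {lam : ℝ} (hl : 0 ≤ lam) :
    LipschitzWith lam.toNNReal (fun x => lam * |x - c|) := by
  refine LipschitzWith.of_dist_le_mul fun x y => ?_
  rw [Real.dist_eq, Real.dist_eq, Real.coe_toNNReal _ hl, ← mul_sub, abs_mul, abs_of_nonneg hl]
  exact mul_le_mul_of_nonneg_left (by simpa using abs_abs_sub_abs_le_abs_sub (x - c) (y - c)) hl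

theorem Fobj_eq_of_ne_zero {a : ℝ} (ha : a ≠ 0) (b lam m : ℝ) :
    Fobj a b lam m = a ^ 2 / 2 * (m - b / a) ^ 2 + lam * |m - 1| := by
  rw [Fobj]
  field_simp
  ring

theorem stmt10_general (a b lam m : ℝ) (ha : 0 < a) (hl : 0 < lam)
    (hm : ∀ x : ℝ, x ≠ m → Fobj a b lam m < Fobj a b lam x) :
    |m - b / a| ≤ lam / a^2 := by
  have hmin (x : ℝ) : a ^ 2 / 2 * (m - b / a) ^ 2 + lam * |m - 1| ≤
      a ^ 2 / 2 * (x - b / a) ^ 2 + lam * |x - 1| := by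
    rw [← Fobj_eq_of_ne_zero ha.ne' b lam m, ← Fobj_eq_of_ne_zero ha.ne' b lam x]
    rcases eq_or_ne x m with rfl | hx
    · rfl
    · exact (hm x hx).le
  simpa [Real.coe_toNNReal _ hl.le] using abs_sub_le_of_forall_quadratic_add_lipschitz_le
    (h := fun x => lam * |x - 1|) (by positivity) (lipschitzWith_const_mul_abs_sub 1 hl.le) hmin

theorem stmt10 (a b lam m : ℝ) (ha : 0 < a) (hl : 0 < lam) (hb : 0 ≤ b)
    (hm : ∀ x : ℝ, x ≠ m → Fobj a b lam m < Fobj a b lam x) :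
    |m - b / a| ≤ lam / a^2 :=
  stmt10_general a b lam m ha hl hm
end

section
/- Let n ∈ ℕ and let c₁, c₂ ∈ ℝⁿ with every coordinate of c₁ strictly positive and every coordinate of c₂ nonnegative, and λ > 0. Then the minimizer over m ∈ ℝⁿ of (1/2)‖c₂ − m ⊙ c₁‖² + λ‖m − 1‖₁ (where ⊙ is coordinatewise product, ‖·‖ the Euclidean norm, ‖·‖₁ the ℓ¹ norm, and 1 the all-ones vector) is given coordinatewise by mᵢ = (c₂ᵢ/c₁ᵢ − 1)·max(0, 1 − λ/(c₁ᵢ²·|c₂ᵢ/c₁ᵢ − 1|)) + 1 when c₂ᵢ ≠ c₁ᵢ, and mᵢ = 1 otherwise. -/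
/-!
The objective is a sum of one-variable terms `½ c₁ᵢ² (zᵢ - uᵢ)² + λ |uᵢ|` in `uᵢ = mᵢ - 1`,
where `zᵢ = c₂ᵢ / c₁ᵢ - 1`, so it suffices that each term is uniquely minimized by the soft
threshold `vᵢ` of `zᵢ`. That holds because `vᵢ` satisfies the optimality condition
`c₁ᵢ² (zᵢ - vᵢ) ∈ λ ∂|·|(vᵢ)`, and the quadratic term then makes the minimum strict.
-/

theorem Fintype.sum_lt_sum_of_forall_lt_of_ne {ι α β : Type*} [Fintype ι] [AddCommMonoid β]
    [PartialOrder β] [IsOrderedCancelAddMonoid β] {f : ι → α → β} {m : ι → α}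
    (hm : ∀ i t, t ≠ m i → f i (m i) < f i t) {x : ι → α} (hx : x ≠ m) :
    ∑ i, f i (m i) < ∑ i, f i (x i) := by
  obtain ⟨j, hj⟩ := Function.ne_iff.mp hx
  refine Finset.sum_lt_sum (fun i _ => ?_) ⟨j, Finset.mem_univ j, hm j _ hj⟩
  rcases eq_or_ne (x i) (m i) with h | h
  · rw [h]
  · exact (hm i _ h).le

/-- The usual `sign z * max 0 (|z| - t)`, written in the shape of the paper's formula (9). -/
noncomputable def softThreshold (t z : ℝ) : ℝ := z * max 0 (1 - t / |z|)

theorem softThreshold_of_abs_le {t z : ℝ} (h : |z| ≤ t) : softThreshold t z = 0 := by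
  rcases eq_or_ne z 0 with rfl | hz
  · simp [softThreshold]
  · have : 1 - t / |z| ≤ 0 := by
      rw [sub_nonpos, one_le_div (abs_pos.mpr hz)]
      exact h
    simp [softThreshold, max_eq_left this]

theorem softThreshold_of_lt_abs {t z : ℝ} (ht : 0 ≤ t) (h : t < |z|) :
    softThreshold t z = z - t * SignType.sign z := by
  have hz : z ≠ 0 := by
    rintro rfl
    rw [abs_zero] at h
    linarith
  have hpos : 0 < 1 - t / |z| := by
    rw [sub_pos, div_lt_one (abs_pos.mpr hz)]
    exact h
  rw [softThreshold, max_eq_right hpos.le]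
  rcases hz.lt_or_gt with hneg | hpos'
  · rw [abs_of_neg hneg, sign_neg hneg, SignType.coe_neg_one]
    field_simp
  · rw [abs_of_pos hpos', sign_pos hpos', SignType.coe_one]
    field_simp

/-- `|s| ≤ 1` and `s * v = |v|` say that `s ∈ ∂|·|(v)`, so `hopt` is the first-order
optimality condition. -/
theorem lasso_lt_of_subgradient {w z lam v s u : ℝ} (hw : 0 < w) (hl : 0 ≤ lam) (hs : |s| ≤ 1)
    (hsv : s * v = |v|) (hopt : w * (z - v) = lam * s) (hu : u ≠ v) :
    1 / 2 * w * (z - v) ^ 2 + lam * |v| < 1 / 2 * w * (z - u) ^ 2 + lam * |u| := by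
  have hsu : s * u ≤ |u| := by
    calc s * u ≤ |s * u| := le_abs_self _
      _ = |s| * |u| := abs_mul s u
      _ ≤ 1 * |u| := by gcongr
      _ = |u| := one_mul _
  have hgap : 0 < 1 / 2 * w * (u - v) ^ 2 := by
    have : u - v ≠ 0 := sub_ne_zero.mpr hu
    positivity
  have hdiff : 1 / 2 * w * (z - u) ^ 2 + lam * |u| - (1 / 2 * w * (z - v) ^ 2 + lam * |v|)
      = 1 / 2 * w * (u - v) ^ 2 + lam * (|u| - s * u) := by
    linear_combination (v - u) * hopt + lam * hsv
  linarith [mul_nonneg hl (sub_nonneg.mpr hsu)]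

theorem exists_subgradient_softThreshold {w z lam : ℝ} (hw : 0 < w) (hl : 0 < lam) :
    ∃ s : ℝ, |s| ≤ 1 ∧ s * softThreshold (lam / w) z = |softThreshold (lam / w) z| ∧
      w * (z - softThreshold (lam / w) z) = lam * s := by
  rcases le_or_gt |z| (lam / w) with h | h
  · -- the subgradient set of `|·|` at `0` is all of `[-1, 1]`
    refine ⟨w * z / lam, ?_, by simp [softThreshold_of_abs_le h], ?_⟩
    · rw [abs_div, abs_mul, abs_of_pos hw, abs_of_pos hl, div_le_one hl, mul_comm]
      exact (le_div_iff₀ hw).mp h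
    · rw [softThreshold_of_abs_le h, sub_zero]
      field_simp
  · have hz : z ≠ 0 := by
      rintro rfl
      rw [abs_zero] at h
      exact (div_pos hl hw).not_gt h
    refine ⟨SignType.sign z, ?_, ?_, ?_⟩
    · rcases hz.lt_or_gt with hneg | hpos <;> simp [*]
    · rw [softThreshold_of_lt_abs (div_pos hl hw).le h]
      rcases hz.lt_or_gt with hneg | hpos
      · simp only [sign_neg hneg, SignType.coe_neg_one, abs_of_neg hneg] at h ⊢
        rw [abs_of_neg (by linarith)]
        ring
      · simp only [sign_pos hpos, SignType.coe_one, abs_of_pos hpos] at h ⊢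
        rw [abs_of_pos (by linarith)]
        ring
    · rw [softThreshold_of_lt_abs (div_pos hl hw).le h]
      field_simp
      ring

theorem lasso_softThreshold_lt {w z lam u : ℝ} (hw : 0 < w) (hl : 0 < lam)
    (hu : u ≠ softThreshold (lam / w) z) :
    1 / 2 * w * (z - softThreshold (lam / w) z) ^ 2 + lam * |softThreshold (lam / w) z|
      < 1 / 2 * w * (z - u) ^ 2 + lam * |u| := by
  obtain ⟨s, hs, hsv, hopt⟩ := exists_subgradient_softThreshold (z := z) hw hl
  exact lasso_lt_of_subgradient hw hl.le hs hsv hopt hu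

theorem ite_eq_softThreshold_add_one {a b lam : ℝ} (ha : 0 < a) :
    (if b = a then (1 : ℝ) else (b / a - 1) * max 0 (1 - lam / (a ^ 2 * |b / a - 1|)) + 1)
      = softThreshold (lam / a ^ 2) (b / a - 1) + 1 := by
  rw [softThreshold, div_div]
  split_ifs with h
  · simp [h, ha.ne']
  · rfl

theorem lasso_coord_lt {a b lam m t : ℝ} (ha : 0 < a) (hl : 0 < lam)
    (hm : m = softThreshold (lam / a ^ 2) (b / a - 1) + 1) (ht : t ≠ m) :
    1 / 2 * (b - m * a) ^ 2 + lam * |m - 1| < 1 / 2 * (b - t * a) ^ 2 + lam * |t - 1| := by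
  have hsq (u : ℝ) : (b - u * a) ^ 2 = a ^ 2 * ((b / a - 1) - (u - 1)) ^ 2 := by
    field_simp
    ring
  rw [hsq, hsq, ← mul_assoc, ← mul_assoc, hm, add_sub_cancel_right]
  exact lasso_softThreshold_lt (by positivity) hl (fun h => ht (by linarith))

open Finset in
theorem stmt12_general (n : ℕ) (c₁ c₂ : Fin n → ℝ) (lam : ℝ)
    (hc₁ : ∀ i, 0 < c₁ i) (hl : 0 < lam) :
    ∀ x : Fin n → ℝ,
      x ≠ (fun i => if c₂ i = c₁ i then (1 : ℝ)
            else (c₂ i / c₁ i - 1) *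
              max 0 (1 - lam / ((c₁ i)^2 * |c₂ i / c₁ i - 1|)) + 1) →
      (1/2) * ∑ i, (c₂ i - (if c₂ i = c₁ i then (1 : ℝ)
            else (c₂ i / c₁ i - 1) *
              max 0 (1 - lam / ((c₁ i)^2 * |c₂ i / c₁ i - 1|)) + 1) * c₁ i)^2
        + lam * ∑ i, |(if c₂ i = c₁ i then (1 : ℝ)
            else (c₂ i / c₁ i - 1) *
              max 0 (1 - lam / ((c₁ i)^2 * |c₂ i / c₁ i - 1|)) + 1) - 1|
      < (1/2) * ∑ i, (c₂ i - x i * c₁ i)^2 + lam * ∑ i, |x i - 1| := by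
  intro x hx
  simp only [mul_sum, ← sum_add_distrib]
  exact Fintype.sum_lt_sum_of_forall_lt_of_ne
    (f := fun i t => 1 / 2 * (c₂ i - t * c₁ i) ^ 2 + lam * |t - 1|)
    (fun i t ht => lasso_coord_lt (hc₁ i) hl (ite_eq_softThreshold_add_one (hc₁ i)) ht) hx

open Finset in
theorem stmt12 (n : ℕ) (c₁ c₂ : Fin n → ℝ) (lam : ℝ)
    (hc₁ : ∀ i, 0 < c₁ i) (hc₂ : ∀ i, 0 ≤ c₂ i) (hl : 0 < lam) :
    ∀ x : Fin n → ℝ,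
      x ≠ (fun i => if c₂ i = c₁ i then (1 : ℝ)
            else (c₂ i / c₁ i - 1) *
              max 0 (1 - lam / ((c₁ i)^2 * |c₂ i / c₁ i - 1|)) + 1) →
      (1/2) * ∑ i, (c₂ i - (if c₂ i = c₁ i then (1 : ℝ)
            else (c₂ i / c₁ i - 1) *
              max 0 (1 - lam / ((c₁ i)^2 * |c₂ i / c₁ i - 1|)) + 1) * c₁ i)^2
        + lam * ∑ i, |(if c₂ i = c₁ i then (1 : ℝ)
            else (c₂ i / c₁ i - 1) *
              max 0 (1 - lam / ((c₁ i)^2 * |c₂ i / c₁ i - 1|)) + 1) - 1|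
      < (1/2) * ∑ i, (c₂ i - x i * c₁ i)^2 + lam * ∑ i, |x i - 1| :=
  stmt12_general n c₁ c₂ lam hc₁ hl
end

section
/- Let a > 0, b₁, b₂ ≥ 0 with b₁ ≤ b₂, λ > 0, and let m₁, m₂ be the unique minimizers of Fᵢ(m) = (1/2)(bᵢ − m·a)² + λ|m − 1| for i = 1, 2. Then m₂ − m₁ ≤ (b₂ − b₁)/a, i.e., the mask estimate is Lipschitz in b with constant 1/a. -/
open Filter Set Topology

noncomputable def proxObjective (a b : ℝ) (g : ℝ → ℝ) (x : ℝ) : ℝ :=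
  (1/2) * (b - x * a)^2 + g x

lemma isMinOn_univ_of_forall_ne_lt {α β : Type*} [Preorder β] {f : α → β} {m : α}
    (h : ∀ x, x ≠ m → f m < f x) : IsMinOn f univ m := fun x _ => by
  rcases eq_or_ne x m with rfl | hx
  exacts [le_rfl, (h x hx).le]

lemma convexOn_univ_mul_abs_sub {lam : ℝ} (hl : 0 ≤ lam) (c : ℝ) :
    ConvexOn ℝ univ fun x : ℝ => lam * |x - c| := by
  simpa only [Real.dist_eq, smul_eq_mul] using (convexOn_univ_dist c).smul hl

namespace ConvexOn

variable {a b m : ℝ} {g : ℝ → ℝ}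

lemma le_sub_of_isMinOn_proxObjective (hg : ConvexOn ℝ univ g)
    (hm : IsMinOn (proxObjective a b g) univ m) (x : ℝ) :
    a * (b - m * a) * (x - m) ≤ g x - g m := by
  have approx : ∀ t ∈ Ioo (0 : ℝ) 1,
      a * (b - m * a) * (x - m) ≤ g x - g m + t * (a * (x - m)) ^ 2 / 2 := by
    rintro t ⟨ht₀, ht₁⟩
    have hconv : g (m + t * (x - m)) ≤ (1 - t) * g m + t * g x := by
      have := hg.2 (mem_univ m) (mem_univ x) (by linarith : 0 ≤ 1 - t) ht₀.le (by ring)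
      simp only [smul_eq_mul] at this
      rwa [show (1 - t) * m + t * x = m + t * (x - m) by ring] at this
    have hmin : proxObjective a b g m ≤ proxObjective a b g (m + t * (x - m)) :=
      hm (mem_univ _)
    unfold proxObjective at hmin
    have : t * (a * (b - m * a) * (x - m)) ≤ t * (g x - g m + t * (a * (x - m)) ^ 2 / 2) := by
      nlinarith
    exact le_of_mul_le_mul_left this ht₀
  have hlim : Tendsto (fun t : ℝ => g x - g m + t * (a * (x - m)) ^ 2 / 2) (𝓝[>] 0)
      (𝓝 (g x - g m)) := by
    have : Continuous fun t : ℝ => g x - g m + t * (a * (x - m)) ^ 2 / 2 := by fun_prop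
    simpa using (this.tendsto 0).mono_left nhdsWithin_le_nhds
  exact ge_of_tendsto hlim (eventually_of_mem (Ioo_mem_nhdsGT one_pos) approx)

lemma sub_le_div_of_isMinOn_proxObjective {b₁ b₂ m₁ m₂ : ℝ} (hg : ConvexOn ℝ univ g)
    (ha : 0 < a) (hb : b₁ ≤ b₂) (hm₁ : IsMinOn (proxObjective a b₁ g) univ m₁)
    (hm₂ : IsMinOn (proxObjective a b₂ g) univ m₂) :
    m₂ - m₁ ≤ (b₂ - b₁) / a := by
  have h₁ := hg.le_sub_of_isMinOn_proxObjective hm₁ m₂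
  have h₂ := hg.le_sub_of_isMinOn_proxObjective hm₂ m₁
  have hmono : a * (m₂ - m₁) * (a * (m₂ - m₁) - (b₂ - b₁)) ≤ 0 := by linarith
  rcases le_or_gt m₂ m₁ with hle | hlt
  · exact (sub_nonpos.mpr hle).trans (div_nonneg (sub_nonneg.mpr hb) ha.le)
  · have hpos : 0 < a * (m₂ - m₁) := mul_pos ha (sub_pos.mpr hlt)
    rw [le_div_iff₀ ha, mul_comm]
    nlinarith

end ConvexOn

theorem stmt16_general (a lam b₁ b₂ m₁ m₂ : ℝ) (ha : 0 < a) (hl : 0 < lam)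
    (hb : b₁ ≤ b₂)
    (hm₁ : ∀ x : ℝ, x ≠ m₁ → Fobj a b₁ lam m₁ < Fobj a b₁ lam x)
    (hm₂ : ∀ x : ℝ, x ≠ m₂ → Fobj a b₂ lam m₂ < Fobj a b₂ lam x) :
    m₂ - m₁ ≤ (b₂ - b₁) / a :=
  (convexOn_univ_mul_abs_sub hl.le 1).sub_le_div_of_isMinOn_proxObjective ha hb
    (isMinOn_univ_of_forall_ne_lt hm₁) (isMinOn_univ_of_forall_ne_lt hm₂)

theorem stmt16 (a lam b₁ b₂ m₁ m₂ : ℝ) (ha : 0 < a) (hl : 0 < lam)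
    (hb₁ : 0 ≤ b₁) (hb₂ : 0 ≤ b₂) (hb : b₁ ≤ b₂)
    (hm₁ : ∀ x : ℝ, x ≠ m₁ → Fobj a b₁ lam m₁ < Fobj a b₁ lam x)
    (hm₂ : ∀ x : ℝ, x ≠ m₂ → Fobj a b₂ lam m₂ < Fobj a b₂ lam x) :
    m₂ - m₁ ≤ (b₂ - b₁) / a :=
  stmt16_general a lam b₁ b₂ m₁ m₂ ha hl hb hm₁ hm₂
end
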